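/- Let X be a topological space, let U and V be nonempty compact metric spaces, and let F : X × U × V → ℝ be jointly continuous. Fix x_0 ∈ X and suppose sup_{u∈U} inf_{v∈V} F(x_0,u,v) < 0. Then there exist ε > 0, a Borel measurable function h : U → V, and an open neighborhood N of x_0 in X such that F(x, u, h(u)) < −ε for every x ∈ N and every u ∈ U. -/

import Mathlib

/-!
For every control `u` the hypothesis gives a counter-control `v u` with `F (x₀, u, v u) < -ε`;
by continuity this persists on a product neighbourhood `N u × W u` of `(x₀, u)`. Finitely many
`W u` cover the compact space `U`, and answering `u` by `v` of the first covering set containing it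
is Borel measurable. The intersection of the finitely many `N u` is the required neighbourhood.
-/

open Set Topology

theorem exists_lt_of_iSup_iInf_lt {U V : Type*} [TopologicalSpace U] [CompactSpace U]
    [TopologicalSpace V] [CompactSpace V] [Nonempty V] {G : U → V → ℝ}
    (hG : Continuous (Function.uncurry G)) {c : ℝ} (h : ⨆ u, ⨅ v, G u v < c) (u : U) :
    ∃ v, G u v < c := by
  obtain ⟨M, hM⟩ := (isCompact_range hG).bddAbove
  have hbddBelow (u : U) : BddBelow (range (G u)) :=
    (isCompact_range (hG.comp (Continuous.prodMk_right u))).bddBelow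
  have hbddAbove : BddAbove (range fun u => ⨅ v, G u v) := by
    refine ⟨M, forall_mem_range.2 fun u => ?_⟩
    let v₀ := Classical.arbitrary V
    exact (ciInf_le (hbddBelow u) v₀).trans (hM (mem_range_self (u, v₀)))
  exact exists_lt_of_ciInf_lt ((le_ciSup hbddAbove u).trans_lt h)

theorem exists_isOpen_prod_lt {X U : Type*} [TopologicalSpace X] [TopologicalSpace U]
    {G : X → U → ℝ} (hG : Continuous (Function.uncurry G)) {x₀ : X} {u₀ : U} {c : ℝ}
    (h : G x₀ u₀ < c) :
    ∃ N W, IsOpen N ∧ IsOpen W ∧ x₀ ∈ N ∧ u₀ ∈ W ∧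
      ∀ x ∈ N, ∀ u ∈ W, G x u < c := by
  obtain ⟨N, W, hN, hW, hx₀, hu₀, hsub⟩ :=
    isOpen_prod_iff.1 (isOpen_lt hG continuous_const) x₀ u₀ h
  exact ⟨N, W, hN, hW, hx₀, hu₀, fun x hx u hu => hsub (mk_mem_prod hx hu)⟩

theorem exists_measurable_selection_of_countable_cover {α β ι : Type*} [MeasurableSpace α]
    [MeasurableSpace β] [Countable ι] [Nonempty ι] {W : ι → Set α}
    (hW : ∀ i, MeasurableSet (W i)) (hcover : ∀ a, ∃ i, a ∈ W i) (v : ι → β) :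
    ∃ h : α → β, Measurable h ∧ ∀ a, ∃ i, a ∈ W i ∧ h a = v i := by
  classical
  obtain ⟨e, he⟩ := exists_surjective_nat ι
  have hcover' (a : α) : ∃ n, a ∈ W (e n) := he.exists.1 (hcover a)
  have hmeas : Measurable fun a => v (e (Nat.find (hcover' a))) :=
    Measurable.find (f := fun n _ => v (e n)) (p := fun n a => a ∈ W (e n))
      (fun _ => measurable_const) (fun n => hW (e n)) hcover'
  exact ⟨_, hmeas, fun a => ⟨_, Nat.find_spec (hcover' a), rfl⟩⟩

theorem localization_subsolution_measurable_selection_general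
    {X U V : Type*} [TopologicalSpace X]
    [MetricSpace U] [CompactSpace U] [Nonempty U]
    [MeasurableSpace U] [BorelSpace U]
    [MetricSpace V] [CompactSpace V] [Nonempty V]
    [MeasurableSpace V]
    (F : X → U → V → ℝ)
    (hF : Continuous fun p : X × U × V => F p.1 p.2.1 p.2.2)
    (x₀ : X) (hneg : (⨆ u : U, ⨅ v : V, F x₀ u v) < 0) :
    ∃ (ε : ℝ) (h : U → V) (N : Set X), 0 < ε ∧ Measurable h ∧
      IsOpen N ∧ x₀ ∈ N ∧ ∀ x ∈ N, ∀ u : U, F x u (h u) < -ε := by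
  obtain ⟨ε, hε, hsup⟩ : ∃ ε > 0, ⨆ u : U, ⨅ v : V, F x₀ u v < -ε :=
    ⟨_, half_pos (neg_pos.2 hneg), by linarith⟩
  have hcounter (u : U) : ∃ v, F x₀ u v < -ε :=
    exists_lt_of_iSup_iInf_lt (G := F x₀) (hF.comp (Continuous.prodMk_right x₀)) hsup u
  choose v hv using hcounter
  have hlocal (u : U) :=
    exists_isOpen_prod_lt (G := fun x u' => F x u' (v u))
      (hF.comp (continuous_fst.prodMk (continuous_snd.prodMk continuous_const))) (hv u)
  choose N W hN hW hx₀N huW hNW using hlocal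
  obtain ⟨t, ht⟩ :=
    isCompact_univ.elim_finite_subcover W hW fun u _ => mem_iUnion.2 ⟨u, huW u⟩
  have hcover (u : U) : ∃ i : t, u ∈ W i := by
    obtain ⟨i, hi, hu⟩ := mem_iUnion₂.1 (ht (mem_univ u))
    exact ⟨⟨i, hi⟩, hu⟩
  have : Nonempty t := ⟨(hcover (Classical.arbitrary U)).choose⟩
  obtain ⟨h, hmeas, hh⟩ := exists_measurable_selection_of_countable_cover
    (fun i : t => (hW i).measurableSet) hcover (fun i => v i)
  refine ⟨ε, h, ⋂ i ∈ t, N i, hε, hmeas, isOpen_biInter_finset fun i _ => hN i,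
    mem_iInter₂.2 fun i _ => hx₀N i, fun x hx u => ?_⟩
  obtain ⟨i, hui, hhu⟩ := hh u
  rw [hhu]
  exact hNW i x (mem_iInter₂.1 hx i i.2) u hui

/-- Measurable selection plus localization for the sub-solution property: if
`sup_u inf_v F(x₀,u,v) < 0` with `U, V` compact metric spaces and `F` jointly
continuous, then there exist `ε > 0`, a Borel measurable counter-control map
`h : U → V`, and an open neighborhood `N` of `x₀` on which `F(x, u, h(u)) < −ε`
for every `u`. -/
theorem localization_subsolution_measurable_selection
    {X U V : Type*} [TopologicalSpace X]
    [MetricSpace U] [CompactSpace U] [Nonempty U]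
    [MeasurableSpace U] [BorelSpace U]
    [MetricSpace V] [CompactSpace V] [Nonempty V]
    [MeasurableSpace V] [BorelSpace V]
    (F : X → U → V → ℝ)
    (hF : Continuous fun p : X × U × V => F p.1 p.2.1 p.2.2)
    (x₀ : X) (hneg : (⨆ u : U, ⨅ v : V, F x₀ u v) < 0) :
    ∃ (ε : ℝ) (h : U → V) (N : Set X), 0 < ε ∧ Measurable h ∧
      IsOpen N ∧ x₀ ∈ N ∧ ∀ x ∈ N, ∀ u : U, F x u (h u) < -ε :=
  localization_subsolution_measurable_selection_general F hF x₀ hneg
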